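/- arXiv:1712.03399 — 3 statements merged into one kernel-verified Lean document; each statement's English description precedes it below -/
import Mathlib

section
/- Let A₁ = diag(cos α, cos β) and A₂ = [[0, sin β],[sin α, 0]] be the Kraus operators of a rank-2 qubit channel Λ₂. Then tr(C²) − tr(Λ₂(I)²) = 2·cos(2β)·cos(2α), where C = vec(A₁)vec(A₁)* + vec(A₂)vec(A₂)* and Λ₂(I) = A₁A₁* + A₂A₂*. Hence the antidegradability condition tr(Λ₂(I)²) ≥ tr(C²) (since det C = 0) holds if and only if cos(2α)·cos(2β) ≤ 0. -/
/-!
`C` is the sum of the rank-one matrices `vᵢ vᵢᵀ` with `vᵢ = vec Aᵢ`, so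
`tr C² = ‖vec A₁‖⁴ + ‖vec A₂‖⁴ + 2 ⟨vec A₁, vec A₂⟩²`, and these inner products are the
Hilbert–Schmidt products `tr (Aᵢᵀ Aⱼ)`. Here `vec A₁ ⊥ vec A₂` and `Λ₂(I)` is diagonal, so with
`x = cos² α`, `y = cos² β` the difference of the two traces is
`(x + y)² + (2 - x - y)² - (x + 1 - y)² - (y + 1 - x)² = 2 (2x - 1) (2y - 1)`.
-/

open Matrix

/-- `vec` stacks the columns of a 2×2 real matrix into ℝ⁴ (as (column, row) pairs). -/
def vec (A : Matrix (Fin 2) (Fin 2) ℝ) : Fin 2 × Fin 2 → ℝ :=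
  fun p => A p.2 p.1

theorem trace_mul_self_vecMulVec_add_vecMulVec {n R : Type*} [Fintype n] [CommRing R]
    (u v : n → R) :
    ((vecMulVec u u + vecMulVec v v) * (vecMulVec u u + vecMulVec v v)).trace
      = (u ⬝ᵥ u) ^ 2 + (v ⬝ᵥ v) ^ 2 + 2 * (u ⬝ᵥ v) ^ 2 := by
  simp only [add_mul, mul_add, vecMulVec_mul_vecMulVec, trace_add, trace_vecMulVec,
    dotProduct_smul, smul_eq_mul, dotProduct_comm v u]
  ring

theorem trace_mul_self_vecMulVec_vec_add_vecMulVec_vec {m n R : Type*} [Fintype m] [Fintype n]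
    [CommRing R] (A B : Matrix m n R) :
    ((vecMulVec A.vec A.vec + vecMulVec B.vec B.vec) *
        (vecMulVec A.vec A.vec + vecMulVec B.vec B.vec)).trace
      = (Aᵀ * A).trace ^ 2 + (Bᵀ * B).trace ^ 2 + 2 * (Aᵀ * B).trace ^ 2 := by
  rw [trace_mul_self_vecMulVec_add_vecMulVec, vec_dotProduct_vec, vec_dotProduct_vec,
    vec_dotProduct_vec]

theorem trace_mul_self_fin_two_diagonal {R : Type*} [CommRing R] (a b : R) :
    (!![a, 0; 0, b] * !![a, 0; 0, b]).trace = a ^ 2 + b ^ 2 := by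
  simp [trace_fin_two, sq]

theorem cos_sq_sin_sq_quartic_identity (α β : ℝ) :
    (Real.cos α ^ 2 + Real.cos β ^ 2) ^ 2 + (Real.sin α ^ 2 + Real.sin β ^ 2) ^ 2
      - ((Real.cos α ^ 2 + Real.sin β ^ 2) ^ 2 + (Real.cos β ^ 2 + Real.sin α ^ 2) ^ 2)
      = 2 * Real.cos (2 * β) * Real.cos (2 * α) := by
  rw [Real.sin_sq, Real.sin_sq, Real.cos_two_mul, Real.cos_two_mul]
  ring

theorem stmt_5 (α β : ℝ) :
    let A₁ : Matrix (Fin 2) (Fin 2) ℝ := !![Real.cos α, 0; 0, Real.cos β]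
    let A₂ : Matrix (Fin 2) (Fin 2) ℝ := !![0, Real.sin β; Real.sin α, 0]
    let C : Matrix (Fin 2 × Fin 2) (Fin 2 × Fin 2) ℝ :=
      Matrix.vecMulVec (_root_.vec A₁) (_root_.vec A₁) + Matrix.vecMulVec (_root_.vec A₂) (_root_.vec A₂)
    let L : Matrix (Fin 2) (Fin 2) ℝ := A₁ * A₁ᴴ + A₂ * A₂ᴴ
    (C * C).trace - (L * L).trace = 2 * Real.cos (2*β) * Real.cos (2*α) ∧
    ((L * L).trace ≥ (C * C).trace ↔ Real.cos (2*α) * Real.cos (2*β) ≤ 0) := by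
  intro A₁ A₂ C L
  have hC : (C * C).trace
      = (Real.cos α ^ 2 + Real.cos β ^ 2) ^ 2 + (Real.sin α ^ 2 + Real.sin β ^ 2) ^ 2 := by
    have hC_vec : C = vecMulVec A₁.vec A₁.vec + vecMulVec A₂.vec A₂.vec := rfl
    rw [hC_vec, trace_mul_self_vecMulVec_vec_add_vecMulVec_vec]
    simp [A₁, A₂, trace_fin_two, mul_apply, Fin.sum_univ_two, sq]
  have hL : L = !![Real.cos α ^ 2 + Real.sin β ^ 2, 0; 0, Real.cos β ^ 2 + Real.sin α ^ 2] := by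
    ext i j
    fin_cases i <;> fin_cases j <;> simp [L, A₁, A₂, vecMul, dotProduct, Fin.sum_univ_two, sq]
  have hdiff : (C * C).trace - (L * L).trace = 2 * Real.cos (2*β) * Real.cos (2*α) := by
    rw [hC, hL, trace_mul_self_fin_two_diagonal, cos_sq_sin_sq_quartic_identity]
  refine ⟨hdiff, ?_⟩
  rw [ge_iff_le, ← sub_nonpos, hdiff, mul_assoc, mul_comm (Real.cos _)]
  constructor <;> intro h <;> linarith
end

section
/- For the qubit depolarizing channel with parameter p ∈ [0,1], the Choi matrix is C_p = [[1−p/2, 0, 0, 1−p],[0, p/2, 0, 0],[0, 0, p/2, 0],[1−p, 0, 0, 1−p/2]], and the antidegradability inequality 2 ≥ tr(C_p²) − 4√(det C_p) holds if and only if p ≥ 1/3. Here tr(C_p²) = 3p² − 6p + 4 and 16·det(C_p) = p³(4 − 3p), so the inequality reads 2 ≥ 3p² − 6p + 4 − √(p³(4−3p)). -/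
open Matrix

noncomputable def depolarizingChoi (p : ℝ) : Matrix (Fin 4) (Fin 4) ℝ :=
  !![1-p/2, 0, 0, 1-p;
     0, p/2, 0, 0;
     0, 0, p/2, 0;
     1-p, 0, 0, 1-p/2]

theorem trace_depolarizingChoi_mul_self (p : ℝ) :
    (depolarizingChoi p * depolarizingChoi p).trace = 3*p^2 - 6*p + 4 := by
  simp [depolarizingChoi, trace, Fin.sum_univ_four]
  ring

theorem det_depolarizingChoi (p : ℝ) :
    (depolarizingChoi p).det = p^3 * (4 - 3*p) / 16 := by
  simp [depolarizingChoi, det_succ_row_zero, Fin.sum_univ_succ, Fin.succAbove]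
  ring

theorem four_mul_sqrt_det_depolarizingChoi (p : ℝ) :
    4 * √(depolarizingChoi p).det = √(p^3 * (4 - 3*p)) := by
  rw [det_depolarizingChoi, Real.sqrt_div' _ (by norm_num), show (16 : ℝ) = 4^2 by norm_num,
    Real.sqrt_sq (by norm_num)]
  ring

theorem sub_sqrt_le_two_iff {p : ℝ} (hp : p ≤ 1) :
    3*p^2 - 6*p + 4 - √(p^3 * (4 - 3*p)) ≤ 2 ↔ 1/3 ≤ p := by
  -- Squaring `3p² - 6p + 2 ≤ √(p³(4 - 3p))` reduces the claim to the sign of this gap.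
  have gap : (3*p^2 - 6*p + 2)^2 - p^3 * (4 - 3*p) = 4 * (1 - p)^3 * (1 - 3*p) := by ring
  have hcube : 0 ≤ (1 - p)^3 := pow_nonneg (sub_nonneg.2 hp) 3
  constructor
  · intro h
    by_contra! hp3
    have hr : 0 < 3*p^2 - 6*p + 2 := by nlinarith
    have hsqrt : √(p^3 * (4 - 3*p)) < 3*p^2 - 6*p + 2 := by
      rw [Real.sqrt_lt' hr]
      nlinarith [pow_pos (sub_pos.2 (hp3.trans (by norm_num : (1:ℝ)/3 < 1))) 3]
    linarith
  · intro hp3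
    have habs : |3*p^2 - 6*p + 2| ≤ √(p^3 * (4 - 3*p)) := Real.abs_le_sqrt (by nlinarith)
    linarith [le_abs_self (3*p^2 - 6*p + 2)]

theorem stmt_13_general (p : ℝ) (hp1 : p ≤ 1) :
    let C : Matrix (Fin 4) (Fin 4) ℝ :=
      !![1-p/2, 0, 0, 1-p;
         0, p/2, 0, 0;
         0, 0, p/2, 0;
         1-p, 0, 0, 1-p/2]
    (C * C).trace = 3*p^2 - 6*p + 4 ∧
    16 * C.det = p^3 * (4 - 3*p) ∧
    ((2 : ℝ) ≥ (C * C).trace - 4 * Real.sqrt C.det ↔ p ≥ 1/3) := by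
  intro C
  rw [show C = depolarizingChoi p from rfl, trace_depolarizingChoi_mul_self, four_mul_sqrt_det_depolarizingChoi, det_depolarizingChoi]
  exact ⟨rfl, by ring, sub_sqrt_le_two_iff hp1⟩

theorem stmt_13 (p : ℝ) (hp0 : 0 ≤ p) (hp1 : p ≤ 1) :
    let C : Matrix (Fin 4) (Fin 4) ℝ :=
      !![1-p/2, 0, 0, 1-p;
         0, p/2, 0, 0;
         0, 0, p/2, 0;
         1-p, 0, 0, 1-p/2]
    (C * C).trace = 3*p^2 - 6*p + 4 ∧
    16 * C.det = p^3 * (4 - 3*p) ∧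
    ((2 : ℝ) ≥ (C * C).trace - 4 * Real.sqrt C.det ↔ p ≥ 1/3) :=
  stmt_13_general p hp1
end

section
/- The function f(p) = 3p² − 6p + 4 − √(p³(4−3p)) satisfies f(p) ≤ 2 if and only if p ≥ 1/3, for p ∈ [0,1]. -/
theorem stmt_14 (p : ℝ) (hp0 : 0 ≤ p) (hp1 : p ≤ 1) :
    3*p^2 - 6*p + 4 - Real.sqrt (p^3 * (4 - 3*p)) ≤ 2 ↔ 1/3 ≤ p := by
  have hs0 : 0 ≤ p^3 * (4 - 3*p) := mul_nonneg (pow_nonneg hp0 3) (by linarith)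
  have hsq := Real.sq_sqrt hs0
  have hnn := Real.sqrt_nonneg (p^3 * (4 - 3*p))
  constructor
  · intro h
    by_contra h'
    push_neg at h'
    have hg : 0 < 3*p^2 - 6*p + 2 := by nlinarith
    have h2 : 3*p^2 - 6*p + 2 ≤ Real.sqrt (p^3 * (4 - 3*p)) := by linarith
    nlinarith [mul_le_mul h2 h2 (le_of_lt hg) hnn, sq_nonneg (p-1), mul_pos (mul_pos (sub_pos.2 h' ) (sub_pos.2 h')) (sub_pos.2 h')]
  · intro h
    rcases le_or_gt (3*p^2 - 6*p + 2) 0 with hg | hg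
    · linarith
    · have key : (3*p^2 - 6*p + 2)^2 ≤ p^3 * (4 - 3*p) := by
        nlinarith [sq_nonneg (p-1), mul_nonneg (mul_nonneg (sub_nonneg.2 hp1) (sub_nonneg.2 hp1)) (sub_nonneg.2 hp1)]
      have := (Real.le_sqrt hg.le hs0).2 key
      linarith
end
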